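/- In minimal logic with the axiom schemes A → T(A) and T(A) ∧ T(B) → T(A ∧ B) and T(A ∧ ¬A) → T(⊥), if there is a liar proposition S with S ↔ T(¬S) derivable, then ¬¬T(⊥) is derivable (i.e., ¬T(⊥) → ⊥). -/
import Mathlib


/-- Propositional formulas built from variables and ⊥ using ∧, ∨, →. -/
inductive Fm : Type
  | var : ℕ → Fm
  | bot : Fm
  | and : Fm → Fm → Fm
  | or : Fm → Fm → Fm
  | imp : Fm → Fm → Fm
deriving DecidableEq

/-- ¬A is defined as A → ⊥. -/
def Fm.neg (A : Fm) : Fm := A.imp .bot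

/-- Hilbert-style derivability in minimal propositional logic (intuitionistic
logic without ex falso quodlibet), extended by an extra set `Ax` of axioms. -/
inductive Deriv (Ax : Fm → Prop) : Fm → Prop
  | ax {A} : Ax A → Deriv Ax A
  | k (A B : Fm) : Deriv Ax (A.imp (B.imp A))
  | s (A B C : Fm) : Deriv Ax ((A.imp (B.imp C)).imp ((A.imp B).imp (A.imp C)))
  | andI (A B : Fm) : Deriv Ax (A.imp (B.imp (A.and B)))
  | andE1 (A B : Fm) : Deriv Ax ((A.and B).imp A)
  | andE2 (A B : Fm) : Deriv Ax ((A.and B).imp B)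
  | orI1 (A B : Fm) : Deriv Ax (A.imp (A.or B))
  | orI2 (A B : Fm) : Deriv Ax (B.imp (A.or B))
  | orE (A B C : Fm) : Deriv Ax ((A.imp C).imp ((B.imp C).imp ((A.or B).imp C)))
  | mp {A B : Fm} : Deriv Ax (A.imp B) → Deriv Ax A → Deriv Ax B


namespace Deriv

variable {Ax : Fm → Prop}

theorem lid (A : Fm) : Deriv Ax (A.imp A) :=
  mp (mp (s A (A.imp A) A) (k A (A.imp A))) (k A A)

theorem lcomp {A B C : Fm} (h1 : Deriv Ax (A.imp B)) (h2 : Deriv Ax (B.imp C)) :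
    Deriv Ax (A.imp C) :=
  mp (mp (s A B C) (mp (k (B.imp C) A) h2)) h1

theorem lap {A B C : Fm} (h1 : Deriv Ax (A.imp (B.imp C))) (h2 : Deriv Ax (A.imp B)) :
    Deriv Ax (A.imp C) :=
  mp (mp (s A B C) h1) h2

theorem lpair {A B C : Fm} (h1 : Deriv Ax (A.imp B)) (h2 : Deriv Ax (A.imp C)) :
    Deriv Ax (A.imp (B.and C)) :=
  lap (lcomp h1 (andI B C)) h2

/-- from ⊢ X → Y conclude ⊢ (Y → Z) → (X → Z) -/
theorem lpre {X Y : Fm} (Z : Fm) (h : Deriv Ax (X.imp Y)) :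
    Deriv Ax ((Y.imp Z).imp (X.imp Z)) :=
  lap (lcomp (k (Y.imp Z) X) (s X Y Z)) (mp (k (X.imp Y) (Y.imp Z)) h)

end Deriv

/-- with schemes A → T(A), T(A) ∧ T(B) → T(A ∧ B),
T(A ∧ ¬A) → T(⊥), and a liar proposition S with S ↔ T(¬S) derivable,
¬¬T(⊥) is derivable. -/
theorem stmt6 (T : Fm → Fm) (Ax : Fm → Prop)
    (hT1 : ∀ A : Fm, Deriv Ax (A.imp (T A)))
    (hT2 : ∀ A B : Fm, Deriv Ax (((T A).and (T B)).imp (T (A.and B))))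
    (hT3 : ∀ A : Fm, Deriv Ax ((T (A.and A.neg)).imp (T .bot)))
    (S : Fm)
    (hS1 : Deriv Ax (S.imp (T S.neg)))
    (hS2 : Deriv Ax ((T S.neg).imp S)) :
    Deriv Ax (T Fm.bot).neg.neg := by
  -- S → T(⊥)
  have hStB : Deriv Ax (S.imp (T .bot)) :=
    Deriv.lcomp (Deriv.lcomp (Deriv.lpair (hT1 S) hS1) (hT2 S S.neg)) (hT3 S)
  -- ¬¬S
  have hnnS : Deriv Ax S.neg.neg :=
    Deriv.lap (Deriv.lid S.neg) (Deriv.lcomp (hT1 S.neg) hS2)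
  exact Deriv.lcomp (Deriv.lpre Fm.bot hStB) hnnS
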